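/- Let m ≥ 2 and let G = Q_{4m} be the dicyclic group of order 4m. Then the Laplacian energy of the commuting conjugacy class graph satisfies: LE(CCC(G)) = 4 if m = 3; LE(CCC(G)) = 2(m − 2)(3m − 5)/(m + 1) if m is odd and m ≥ 5; and LE(CCC(G)) = 6(m − 1)(m − 2)/(m + 1) if m is even. -/

import Mathlib

noncomputable section

open scoped Classical

/-- The adjacency matrix (over `ℝ`) of a simple graph. -/
def adjMat {V : Type*} (G : SimpleGraph V) : Matrix V V ℝ :=
  Matrix.of fun u v => if G.Adj u v then 1 else 0

/-- The diagonal degree matrix (over `ℝ`) of a simple graph. -/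
def degMat {V : Type*} (G : SimpleGraph V) : Matrix V V ℝ :=
  Matrix.diagonal fun v => ({w | G.Adj v w}.ncard : ℝ)

/-- The Laplacian matrix `L(G) = D(G) - A(G)`. -/
def lapMat {V : Type*} (G : SimpleGraph V) : Matrix V V ℝ :=
  degMat G - adjMat G

/-- The signless Laplacian matrix `Q(G) = D(G) + A(G)`. -/
def signlessLapMat {V : Type*} (G : SimpleGraph V) : Matrix V V ℝ :=
  degMat G + adjMat G

/-- The multiset of eigenvalues (with multiplicity) of a real matrix indexed by a finite type,
i.e. the multiset of roots of its characteristic polynomial. -/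
def eigMultiset {V : Type*} (M : Matrix V V ℝ) : Multiset ℝ :=
  if h : Finite V then
    haveI := h
    haveI := Fintype.ofFinite V
    M.charpoly.roots
  else 0

/-- The energy of a graph: the sum of the absolute values of the adjacency eigenvalues. -/
def graphEnergy {V : Type*} (G : SimpleGraph V) : ℝ :=
  ((eigMultiset (adjMat G)).map fun x => |x|).sum

/-- The Laplacian energy `LE(G) = Σ_μ |μ - 2e/v|`, where `e` is the number of edges and
`v` the number of vertices. -/
def lapEnergy {V : Type*} (G : SimpleGraph V) : ℝ :=
  ((eigMultiset (lapMat G)).map fun mu =>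
    |mu - 2 * (G.edgeSet.ncard : ℝ) / (Nat.card V : ℝ)|).sum

/-- The signless Laplacian energy `LE⁺(G) = Σ_ν |ν - 2e/v|`, where `e` is the number of edges
and `v` the number of vertices. -/
def signlessLapEnergy {V : Type*} (G : SimpleGraph V) : ℝ :=
  ((eigMultiset (signlessLapMat G)).map fun nu =>
    |nu - 2 * (G.edgeSet.ncard : ℝ) / (Nat.card V : ℝ)|).sum

/-- The commuting conjugacy class graph of a group `G`: the vertices are the conjugacy classes
of the non-central elements of `G`, and two distinct classes are adjacent if they contain
commuting representatives. -/
def CCC (G : Type*) [Group G] :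
    SimpleGraph {c : ConjClasses G // ∃ g : G, g ∉ Subgroup.center G ∧ ConjClasses.mk g = c} where
  Adj c d := c ≠ d ∧
    ∃ x ∈ ConjClasses.carrier c.1, ∃ y ∈ ConjClasses.carrier d.1, Commute x y
  symm := by
    constructor
    rintro c d ⟨hne, x, hx, y, hy, hxy⟩
    exact ⟨hne.symm, y, hy, x, hx, hxy.symm⟩
  loopless := by
    constructor
    rintro c ⟨hne, -⟩
    exact hne rfl

open Polynomial Matrix



lemma charpoly_KL (N : ℕ) (hN : 1 ≤ N) :
    Matrix.charpoly ((N : ℝ) • (1 : Matrix (Fin N) (Fin N) ℝ) - Matrix.of fun _ _ => (1:ℝ)) =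
      X * (X - C (N : ℝ)) ^ (N - 1) := by
  set M : Matrix (Fin N) (Fin N) ℝ := (N : ℝ) • 1 - Matrix.of fun _ _ => (1:ℝ) with hM
  have hcm : charmatrix M =
      (X - C (N : ℝ)) • (1 : Matrix (Fin N) (Fin N) ℝ[X]) + Matrix.of fun _ _ => (1 : ℝ[X]) := by
    ext i j
    by_cases h : i = j
    · subst h
      simp [M, charmatrix_apply_eq, Matrix.one_apply, Matrix.smul_apply, Matrix.add_apply]
      ring
    · simp [M, charmatrix_apply_ne _ _ _ h, Matrix.one_apply_ne h, Matrix.smul_apply,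
        Matrix.add_apply, Matrix.sub_apply]
  rw [Matrix.charpoly, hcm]
  set K := FractionRing ℝ[X]
  have hinj : Function.Injective (algebraMap ℝ[X] K) := IsFractionRing.injective ℝ[X] K
  apply hinj
  rw [RingHom.map_det, RingHom.mapMatrix_apply]
  set c : K := algebraMap ℝ[X] K (X - C (N : ℝ)) with hc
  have hc0 : c ≠ 0 := by
    simp only [hc, ne_eq, map_eq_zero_iff _ hinj]
    exact X_sub_C_ne_zero _
  have hCN : algebraMap ℝ[X] K (C ((N:ℕ) : ℝ)) = ((N:ℕ) : K) := by
    rw [map_natCast C, map_natCast]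
  have hφX : algebraMap ℝ[X] K X = c + (N : K) := by
    have h1 : (X : ℝ[X]) = (X - C (N:ℝ)) + C (N:ℝ) := by ring
    rw [h1, map_add, ← hc, hCN]
  have hmap : (((X - C (N : ℝ)) • (1 : Matrix (Fin N) (Fin N) ℝ[X]) +
      Matrix.of fun _ _ => (1 : ℝ[X])).map (algebraMap ℝ[X] K)) =
      c • ((1 : Matrix (Fin N) (Fin N) K) +
        Matrix.replicateCol Unit (fun _ => c⁻¹) * Matrix.replicateRow Unit (fun _ => (1:K))) := by
    ext i j
    by_cases h : i = j
    · subst h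
      simp [Matrix.one_apply, Matrix.mul_apply, mul_add, mul_inv_cancel₀ hc0]
      rw [hφX]; ring
    · simp [Matrix.one_apply_ne h, Matrix.mul_apply, mul_inv_cancel₀ hc0]
  rw [hmap, Matrix.det_smul, Matrix.det_one_add_replicateCol_mul_replicateRow]
  have hdot : dotProduct (fun _ : Fin N => (1:K)) (fun _ => c⁻¹) = N * c⁻¹ := by
    simp [dotProduct]
  rw [hdot, _root_.map_mul, map_pow, ← hc, hφX]
  obtain ⟨k, rfl⟩ : ∃ k, N = k + 1 := ⟨N - 1, (Nat.succ_pred_eq_of_pos hN).symm⟩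
  simp only [Fintype.card_fin, Nat.add_sub_cancel]
  linear_combination (((k + 1 : ℕ) : K) * c ^ k) * mul_inv_cancel₀ hc0

lemma charpoly_zero_matrix (k : ℕ) :
    Matrix.charpoly (0 : Matrix (Fin k) (Fin k) ℝ) = X ^ k := by
  rw [Matrix.charpoly]
  have : charmatrix (0 : Matrix (Fin k) (Fin k) ℝ) = Matrix.diagonal fun _ => (X : ℝ[X]) := by
    ext i j
    by_cases h : i = j
    · subst h; simp
    · simp [charmatrix_apply_ne _ _ _ h, Matrix.diagonal_apply_ne _ h]
  rw [this, Matrix.det_diagonal]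
  simp

lemma roots_KL (N : ℕ) (hN : 1 ≤ N) :
    (Matrix.charpoly ((N : ℝ) • (1 : Matrix (Fin N) (Fin N) ℝ) - Matrix.of fun _ _ => (1:ℝ))).roots
      = {0} + (N - 1) • {(N : ℝ)} := by
  rw [charpoly_KL N hN, Polynomial.roots_mul, Polynomial.roots_X, Polynomial.roots_pow,
    Polynomial.roots_X_sub_C]
  exact mul_ne_zero X_ne_zero (pow_ne_zero _ (X_sub_C_ne_zero _))


lemma eigMultiset_eq {V : Type*} [DecidableEq V] [Fintype V] (M : Matrix V V ℝ) :
    eigMultiset M = M.charpoly.roots := by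
  rw [eigMultiset, dif_pos (Finite.of_fintype V)]
  congr!

lemma lapMat_map_iso {V W : Type*} [Fintype V] [Fintype W]
    {G : SimpleGraph V} {H : SimpleGraph W} (e : G ≃g H) :
    lapMat H = Matrix.reindex e.toEquiv e.toEquiv (lapMat G) := by
  ext w1 w2
  have hdeg : ∀ w : W, {w' | H.Adj w w'}.ncard = {v | G.Adj (e.symm w) v}.ncard := by
    intro w
    have himg : {w' | H.Adj w w'} = e '' {v | G.Adj (e.symm w) v} := by
      ext w'
      constructor
      · intro hw
        exact ⟨e.symm w', by simpa using e.symm.map_adj_iff.mpr hw, by simp⟩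
      · rintro ⟨v, hv, rfl⟩
        have := e.map_adj_iff.mpr hv
        simpa using this
    rw [himg]
    exact Set.ncard_image_of_injective _ e.injective
  simp only [Matrix.reindex_apply, Matrix.submatrix_apply, lapMat, degMat, adjMat,
    Matrix.sub_apply, Matrix.of_apply]
  have hadj : G.Adj (e.toEquiv.symm w1) (e.toEquiv.symm w2) ↔ H.Adj w1 w2 :=
    e.symm.map_adj_iff
  congr 1
  · simp only [Matrix.diagonal_apply]
    by_cases h : w1 = w2
    · subst h; rw [if_pos rfl, if_pos rfl, hdeg]; rfl
    · rw [if_neg h, if_neg (fun hc => h (by simpa using congrArg e hc))]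
  · rw [hadj]

lemma lapEnergy_iso {V W : Type*} [DecidableEq V] [DecidableEq W] [Fintype V] [Fintype W]
    {G : SimpleGraph V} {H : SimpleGraph W} (e : G ≃g H) :
    lapEnergy G = lapEnergy H := by
  have hmat : (lapMat H).charpoly = (lapMat G).charpoly := by
    rw [lapMat_map_iso e, Matrix.charpoly_reindex]
  have hcard : (Nat.card V : ℝ) = (Nat.card W : ℝ) := by
    exact_mod_cast Nat.card_congr e.toEquiv
  have hedge : (G.edgeSet.ncard : ℝ) = (H.edgeSet.ncard : ℝ) := by
    have := Nat.card_congr e.mapEdgeSet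
    rw [Nat.card_coe_set_eq, Nat.card_coe_set_eq] at this
    exact_mod_cast this
  rw [lapEnergy, lapEnergy, eigMultiset_eq, eigMultiset_eq, hmat, hcard, hedge]

/-- The concrete commuting conjugacy class graph of `Q_{4m}`:
a complete graph on `m-1` vertices, plus an edge (if `m` is odd) or two isolated
vertices (if `m` is even). -/
def CG (m : ℕ) : SimpleGraph (Fin (m-1) ⊕ Fin 2) where
  Adj u v := match u, v with
    | Sum.inl i, Sum.inl j => i ≠ j
    | Sum.inr b, Sum.inr b' => b ≠ b' ∧ Odd m
    | _, _ => False
  symm := by constructor; rintro (i|b) (j|b') h <;> simp_all <;> tauto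
  loopless := by constructor; rintro (i|b) h <;> simp_all

@[simp] lemma CG_adj_ll (m : ℕ) (i j : Fin (m-1)) :
    (CG m).Adj (Sum.inl i) (Sum.inl j) ↔ i ≠ j := Iff.rfl
@[simp] lemma CG_adj_rr (m : ℕ) (b b' : Fin 2) :
    (CG m).Adj (Sum.inr b) (Sum.inr b') ↔ b ≠ b' ∧ Odd m := Iff.rfl
@[simp] lemma CG_adj_lr (m : ℕ) (i : Fin (m-1)) (b : Fin 2) :
    ¬ (CG m).Adj (Sum.inl i) (Sum.inr b) := fun h => h
@[simp] lemma CG_adj_rl (m : ℕ) (i : Fin (m-1)) (b : Fin 2) :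
    ¬ (CG m).Adj (Sum.inr b) (Sum.inl i) := fun h => h

lemma CG_ncard_l (m : ℕ) (i : Fin (m-1)) :
    {w | (CG m).Adj (Sum.inl i) w}.ncard = m - 2 := by
  have himg : {w | (CG m).Adj (Sum.inl i) w} = Sum.inl '' {j : Fin (m-1) | j ≠ i} := by
    ext (j|b) <;> simp [ne_comm]
  rw [himg, Set.ncard_image_of_injective _ Sum.inl_injective]
  have h2 : {j : Fin (m-1) | j ≠ i} = Set.univ \ {i} := by
    ext j; simp
  rw [h2, Set.ncard_diff_singleton_of_mem (Set.mem_univ i),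
    Set.ncard_univ, Nat.card_eq_fintype_card, Fintype.card_fin]
  omega

lemma CG_ncard_r (m : ℕ) (b : Fin 2) :
    {w | (CG m).Adj (Sum.inr b) w}.ncard = if Odd m then 1 else 0 := by
  have himg : {w | (CG m).Adj (Sum.inr b) w} = Sum.inr '' {b' : Fin 2 | b' ≠ b ∧ Odd m} := by
    ext (j|b') <;> simp [ne_comm, and_comm]
  rw [himg, Set.ncard_image_of_injective _ Sum.inr_injective]
  by_cases h : Odd m
  · rw [if_pos h]
    have : {b' : Fin 2 | b' ≠ b ∧ Odd m} = {b + 1} := by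
      ext b'
      simp [h]
      constructor
      · intro hb; fin_omega
      · intro hb; subst hb; fin_omega
    rw [this, Set.ncard_singleton]
  · rw [if_neg h]
    have : {b' : Fin 2 | b' ≠ b ∧ Odd m} = ∅ := by
      ext b'; simp [h]
    simp [this]

def KL (N : ℕ) : Matrix (Fin N) (Fin N) ℝ := (N : ℝ) • 1 - Matrix.of fun _ _ => (1:ℝ)

lemma lapMat_CG (m : ℕ) (hm : 2 ≤ m) :
    lapMat (CG m) = Matrix.fromBlocks (KL (m-1)) 0 0
      (if Odd m then KL 2 else 0) := by
  have h1 : ((m - 2 : ℕ) : ℝ) = (m : ℝ) - 2 := by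
    rw [Nat.cast_sub hm]; norm_num
  have h2 : ((m - 1 : ℕ) : ℝ) = (m : ℝ) - 1 := by
    rw [Nat.cast_sub (by omega : 1 ≤ m)]; norm_num
  ext (i|b) (j|b')
  · by_cases h : i = j
    · subst h
      simp [lapMat, degMat, adjMat, KL, Matrix.diagonal_apply, Matrix.one_apply,
        CG_ncard_l, h1, h2, smul_eq_mul]
      ring
    · simp [lapMat, degMat, adjMat, KL, Matrix.diagonal_apply, Matrix.one_apply, h,
        smul_eq_mul, Sum.inl_injective.ne_iff.mpr h]
  · simp [lapMat, degMat, adjMat, Matrix.diagonal_apply]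
  · simp [lapMat, degMat, adjMat, Matrix.diagonal_apply]
  · by_cases hodd : Odd m
    · by_cases h : b = b'
      · subst h
        simp [lapMat, degMat, adjMat, KL, Matrix.diagonal_apply, Matrix.one_apply,
          CG_ncard_r, hodd, smul_eq_mul]
        norm_num
      · simp [lapMat, degMat, adjMat, KL, Matrix.diagonal_apply, Matrix.one_apply, h,
          hodd, smul_eq_mul, Sum.inr_injective.ne_iff.mpr h]
    · by_cases h : b = b'
      · subst h
        simp [lapMat, degMat, adjMat, Matrix.diagonal_apply, CG_ncard_r, hodd]
      · simp [lapMat, degMat, adjMat, Matrix.diagonal_apply, h, hodd,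
          Sum.inr_injective.ne_iff.mpr h]

lemma deg_eq {V : Type*} [Fintype V] (G : SimpleGraph V) [DecidableRel G.Adj] (v : V) :
    G.degree v = {w | G.Adj v w}.ncard := by
  rw [← SimpleGraph.card_neighborSet_eq_degree, ← Nat.card_coe_set_eq,
    Nat.card_eq_fintype_card]
  exact Fintype.card_congr (Equiv.refl _)

lemma two_mul_edges_CG (m : ℕ) (hm : 2 ≤ m) :
    2 * (CG m).edgeSet.ncard = (m-1)*(m-2) + (if Odd m then 2 else 0) := by
  have hcard : (CG m).edgeSet.ncard = (CG m).edgeFinset.card := by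
    rw [SimpleGraph.edgeFinset_card, ← Nat.card_coe_set_eq, Nat.card_eq_fintype_card]
  rw [hcard, ← SimpleGraph.sum_degrees_eq_twice_card_edges]
  rw [Fintype.sum_sum_type]
  have hl : ∀ i : Fin (m-1), (CG m).degree (Sum.inl i) = m - 2 := fun i => by
    rw [deg_eq, CG_ncard_l]
  have hr : ∀ b : Fin 2, (CG m).degree (Sum.inr b) = if Odd m then 1 else 0 := fun b => by
    rw [deg_eq, CG_ncard_r]
  simp only [hl, hr, Finset.sum_const, Finset.card_univ, Fintype.card_fin, smul_eq_mul]
  by_cases h : Odd m <;> simp [h] <;> ring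

lemma eig_CG (m : ℕ) (hm : 2 ≤ m) :
    eigMultiset (lapMat (CG m)) =
      ({0} + Multiset.replicate (m-2) (((m-1:ℕ)) : ℝ)) +
      (if Odd m then ({0} + Multiset.replicate 1 (2:ℝ)) else Multiset.replicate 2 (0:ℝ)) := by
  rw [eigMultiset_eq, lapMat_CG m hm]
  have hfb := Matrix.charpoly_fromBlocks_zero₁₂ (KL (m-1)) (0 : Matrix (Fin 2) (Fin (m-1)) ℝ)
    (if Odd m then KL 2 else 0)
  rw [hfb]
  rw [Polynomial.roots_mul (mul_ne_zero (Matrix.charpoly_monic _).ne_zero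
    (Matrix.charpoly_monic _).ne_zero)]
  congr 1
  · have := roots_KL (m-1) (by omega)
    rw [KL, this, ← Multiset.nsmul_singleton]
    norm_num [Nat.sub_sub]
  · by_cases h : Odd m
    · rw [if_pos h, if_pos h]
      have := roots_KL 2 (by omega)
      rw [KL, this]
      norm_num [← Multiset.nsmul_singleton]
    · rw [if_neg h, if_neg h, charpoly_zero_matrix, Polynomial.roots_pow, Polynomial.roots_X,
        ← Multiset.nsmul_singleton]

lemma card_V (m : ℕ) (hm : 2 ≤ m) : Nat.card (Fin (m-1) ⊕ Fin 2) = m + 1 := by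
  simp [Nat.card_eq_fintype_card]
  omega

lemma LE_CG_odd (m : ℕ) (hm : 2 ≤ m) (hodd : Odd m) :
    lapEnergy (CG m) =
      2 * ((((m:ℝ)-1)*((m:ℝ)-2)+2)/((m:ℝ)+1))
        + |2 - ((((m:ℝ)-1)*((m:ℝ)-2)+2)/((m:ℝ)+1))|
        + ((m:ℝ)-2) * (((m:ℝ)-1) - ((((m:ℝ)-1)*((m:ℝ)-2)+2)/((m:ℝ)+1))) := by
  have h1 : ((m - 2 : ℕ) : ℝ) = (m : ℝ) - 2 := by rw [Nat.cast_sub hm]; norm_num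
  have h2 : ((m - 1 : ℕ) : ℝ) = (m : ℝ) - 1 := by rw [Nat.cast_sub (by omega : 1 ≤ m)]; norm_num
  have hM : (0:ℝ) < (m:ℝ) + 1 := by positivity
  have hE : ((CG m).edgeSet.ncard : ℝ) = (((m:ℝ)-1)*((m:ℝ)-2)+2)/2 := by
    have hthis := two_mul_edges_CG m hm
    rw [if_pos hodd] at hthis
    have h4 : (2:ℝ) * ((CG m).edgeSet.ncard : ℝ)
        = ((m-1:ℕ):ℝ)*((m-2:ℕ):ℝ) + 2 := by exact_mod_cast hthis
    rw [h1, h2] at h4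
    linarith
  set a : ℝ := (((m:ℝ)-1)*((m:ℝ)-2)+2)/((m:ℝ)+1) with ha
  have hA : 2 * ((CG m).edgeSet.ncard : ℝ) / ((Nat.card (Fin (m-1) ⊕ Fin 2) : ℕ) : ℝ) = a := by
    rw [card_V m hm, hE, ha]
    push_cast
    field_simp
  have ha0 : 0 ≤ a := by
    rw [ha]
    have hm' : (2:ℝ) ≤ (m:ℝ) := by exact_mod_cast hm
    have : (0:ℝ) ≤ ((m:ℝ)-1)*((m:ℝ)-2)+2 := by nlinarith
    positivity
  have ham : a ≤ (m:ℝ) - 1 := by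
    have hm' : (2:ℝ) ≤ (m:ℝ) := by exact_mod_cast hm
    rw [ha, div_le_iff₀ hM]
    nlinarith
  rw [lapEnergy, eig_CG m hm, if_pos hodd]
  simp only [Multiset.map_add, Multiset.sum_add, Multiset.map_singleton,
    Multiset.sum_singleton, Multiset.map_replicate, Multiset.sum_replicate, smul_eq_mul,
    nsmul_eq_mul]
  rw [hA, h1, h2]
  have e0 : |0 - a| = a := by rw [zero_sub, abs_neg, abs_of_nonneg ha0]
  have e1 : |(m:ℝ) - 1 - a| = (m:ℝ) - 1 - a := abs_of_nonneg (by linarith)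
  rw [e0, e1]
  have e2 : |2 - a| = |2 - a| := rfl
  ring

lemma LE_CG_even (m : ℕ) (hm : 2 ≤ m) (heven : ¬ Odd m) :
    lapEnergy (CG m) =
      3 * ((((m:ℝ)-1)*((m:ℝ)-2))/((m:ℝ)+1))
        + ((m:ℝ)-2) * (((m:ℝ)-1) - ((((m:ℝ)-1)*((m:ℝ)-2))/((m:ℝ)+1))) := by
  have h1 : ((m - 2 : ℕ) : ℝ) = (m : ℝ) - 2 := by rw [Nat.cast_sub hm]; norm_num
  have h2 : ((m - 1 : ℕ) : ℝ) = (m : ℝ) - 1 := by rw [Nat.cast_sub (by omega : 1 ≤ m)]; norm_num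
  have hM : (0:ℝ) < (m:ℝ) + 1 := by positivity
  have hE : ((CG m).edgeSet.ncard : ℝ) = (((m:ℝ)-1)*((m:ℝ)-2))/2 := by
    have hthis := two_mul_edges_CG m hm
    rw [if_neg heven, add_zero] at hthis
    have h4 : (2:ℝ) * ((CG m).edgeSet.ncard : ℝ)
        = ((m-1:ℕ):ℝ)*((m-2:ℕ):ℝ) := by exact_mod_cast hthis
    rw [h1, h2] at h4
    linarith
  set a : ℝ := (((m:ℝ)-1)*((m:ℝ)-2))/((m:ℝ)+1) with ha
  have hA : 2 * ((CG m).edgeSet.ncard : ℝ) / ((Nat.card (Fin (m-1) ⊕ Fin 2) : ℕ) : ℝ) = a := by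
    rw [card_V m hm, hE, ha]
    push_cast
    field_simp
  have ha0 : 0 ≤ a := by
    rw [ha]
    have hm' : (2:ℝ) ≤ (m:ℝ) := by exact_mod_cast hm
    have : (0:ℝ) ≤ ((m:ℝ)-1)*((m:ℝ)-2) := by nlinarith
    positivity
  have ham : a ≤ (m:ℝ) - 1 := by
    have hm' : (2:ℝ) ≤ (m:ℝ) := by exact_mod_cast hm
    rw [ha, div_le_iff₀ hM]
    nlinarith
  rw [lapEnergy, eig_CG m hm, if_neg heven]
  simp only [Multiset.map_add, Multiset.sum_add, Multiset.map_singleton,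
    Multiset.sum_singleton, Multiset.map_replicate, Multiset.sum_replicate, smul_eq_mul,
    nsmul_eq_mul]
  rw [hA, h1, h2]
  have e0 : |0 - a| = a := by rw [zero_sub, abs_neg, abs_of_nonneg ha0]
  have e1 : |(m:ℝ) - 1 - a| = (m:ℝ) - 1 - a := abs_of_nonneg (by linarith)
  rw [e0, e1]
  ring

open QuaternionGroup

variable {m : ℕ}

abbrev Z (m : ℕ) := ZMod (2 * m)

lemma a_inv (i : Z m) : (a i)⁻¹ = a (-i) := rfl
lemma xa_inv (i : Z m) : (xa i)⁻¹ = xa ((m : Z m) + i) := rfl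

lemma two_m_zero : ((m : Z m)) + (m : Z m) = 0 := by
  have h2 : ((2 * m : ℕ) : Z m) = 0 := ZMod.natCast_self _
  push_cast at h2
  linear_combination h2

lemma F1 (hm : 2 ≤ m) (i : Z m) : i + i = 0 ↔ i = 0 ∨ i = (m : Z m) := by
  haveI : NeZero (2 * m) := ⟨by omega⟩
  constructor
  · intro h
    have hv : ((i.val + i.val : ℕ) : Z m) = 0 := by
      push_cast
      rw [ZMod.natCast_zmod_val]
      exact h
    rw [ZMod.natCast_eq_zero_iff] at hv
    have hlt : i.val < 2 * m := ZMod.val_lt i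
    have hcase : i.val = 0 ∨ i.val = m := by
      rcases hv with ⟨c, hc⟩
      have hcle : c ≤ 1 := by nlinarith
      interval_cases c <;> omega
    rcases hcase with h0 | h0
    · left; rw [← ZMod.natCast_zmod_val i, h0]; simp
    · right; rw [← ZMod.natCast_zmod_val i, h0]
  · rintro (rfl | rfl)
    · simp
    · exact two_m_zero

def ψ : Z m →+* ZMod 2 := ZMod.castHom ⟨m, rfl⟩ (ZMod 2)

lemma psi_natCast (k : ℕ) : (ψ ((k : ℕ) : Z m)) = ((k : ℕ) : ZMod 2) := map_natCast ψ k

lemma psi_neg (i : Z m) : ψ (-i) = ψ i := by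
  rw [map_neg]; exact CharTwo.neg_eq _

lemma psi_double (k : Z m) : ψ (k + k) = 0 := by
  rw [map_add]; exact CharTwo.add_self_eq_zero _

lemma psi_even (hm : 2 ≤ m) (d : Z m) (h : ψ d = 0) : ∃ k : Z m, d = k + k := by
  haveI : NeZero (2 * m) := ⟨by omega⟩
  have hv : ψ d = ((d.val : ℕ) : ZMod 2) := by
    conv_lhs => rw [← ZMod.natCast_zmod_val d]
    exact psi_natCast d.val
  rw [hv, ZMod.natCast_eq_zero_iff] at h
  obtain ⟨c, hc⟩ := h
  refine ⟨((c : ℕ) : Z m), ?_⟩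
  have : ((d.val : ℕ) : Z m) = ((c + c : ℕ) : Z m) := by congr 1; omega
  rw [← ZMod.natCast_zmod_val d, this]
  push_cast
  ring

lemma conj_a (g : QuaternionGroup m) (i : Z m) :
    g * a i * g⁻¹ = a i ∨ g * a i * g⁻¹ = a (-i) := by
  rcases g with j | j
  · left; rw [a_inv, a_mul_a, a_mul_a]; congr 1; ring
  · right
    rw [xa_inv, xa_mul_a, xa_mul_xa]
    congr 1
    linear_combination two_m_zero

lemma conj_xa (g : QuaternionGroup m) (i : Z m) :
    ∃ k : Z m, g * xa i * g⁻¹ = xa (i + (k + k)) ∨ g * xa i * g⁻¹ = xa ((k + k) - i) := by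
  rcases g with j | j
  · refine ⟨-j, Or.inl ?_⟩
    rw [a_inv, a_mul_xa, xa_mul_a]
    congr 1; ring
  · refine ⟨j, Or.inr ?_⟩
    rw [xa_inv, xa_mul_xa, a_mul_xa]
    congr 1
    ring

lemma isConj_a_iff (i : Z m) (x : QuaternionGroup m) :
    IsConj (a i) x ↔ x = a i ∨ x = a (-i) := by
  constructor
  · intro h
    obtain ⟨c, hc⟩ := isConj_iff.mp h
    rcases conj_a c i with h' | h' <;> rw [hc] at h'
    · exact Or.inl h'
    · exact Or.inr h'
  · rintro (rfl | rfl)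
    · exact IsConj.refl _
    · refine isConj_iff.mpr ⟨xa 0, ?_⟩
      rw [xa_inv, xa_mul_a, xa_mul_xa]
      congr 1
      linear_combination two_m_zero

lemma isConj_xa_iff (i : Z m) (x : QuaternionGroup m) (hm : 2 ≤ m) :
    IsConj (xa i) x ↔ ∃ j, x = xa j ∧ ψ j = ψ i := by
  constructor
  · intro h
    obtain ⟨c, hc⟩ := isConj_iff.mp h
    obtain ⟨k, h' | h'⟩ := conj_xa c i <;> rw [hc] at h'
    · exact ⟨_, h', by rw [map_add, psi_double, add_zero]⟩
    · refine ⟨_, h', ?_⟩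
      rw [map_sub, psi_double, zero_sub]
      exact CharTwo.neg_eq _
  · rintro ⟨j, rfl, hψ⟩
    have h0 : ψ (j - i) = 0 := by rw [map_sub, hψ, sub_self]
    obtain ⟨k, hk⟩ := psi_even hm _ h0
    refine isConj_iff.mpr ⟨a (-k), ?_⟩
    rw [a_inv, a_mul_xa, xa_mul_a]
    congr 1
    have : j = i + (k + k) := by linear_combination hk
    rw [this]; ring

lemma not_isConj_a_xa (i j : Z m) : ¬ IsConj (a i) (xa j) := by
  intro h
  obtain ⟨c, hc⟩ := isConj_iff.mp h
  rcases conj_a c i with h' | h' <;> rw [hc] at h' <;> exact (by simp at h')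

lemma a_m_mem_center : a (m : Z m) ∈ Subgroup.center (QuaternionGroup m) := by
  rw [Subgroup.mem_center_iff]
  rintro (j | j)
  · rw [a_mul_a, a_mul_a]; congr 1; ring
  · rw [xa_mul_a, a_mul_xa]; congr 1; linear_combination two_m_zero

lemma a_noncentral (i : Z m) (h2 : i + i ≠ 0) :
    a i ∉ Subgroup.center (QuaternionGroup m) := by
  intro hc
  have h := Subgroup.mem_center_iff.mp hc (xa 0)
  rw [xa_mul_a, a_mul_xa, xa.injEq] at h
  exact h2 (by linear_combination h)

lemma xa_noncentral (hm : 2 ≤ m) (i : Z m) :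
    xa i ∉ Subgroup.center (QuaternionGroup m) := by
  intro hc
  have h := Subgroup.mem_center_iff.mp hc (a 1)
  rw [a_mul_xa, xa_mul_a, xa.injEq] at h
  have h2 : ((2 : ℕ) : Z m) = 0 := by push_cast; linear_combination -h
  rw [ZMod.natCast_eq_zero_iff] at h2
  have := Nat.le_of_dvd (by norm_num) h2
  omega

lemma commute_a_a (s t : Z m) : Commute (a s) (a t) := by
  unfold Commute SemiconjBy
  rw [a_mul_a, a_mul_a]; congr 1; ring

lemma commute_a_xa (s t : Z m) : Commute (a s) (xa t) ↔ s + s = 0 := by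
  unfold Commute SemiconjBy
  rw [a_mul_xa, xa_mul_a, xa.injEq]
  constructor
  · intro h; linear_combination -h
  · intro h; linear_combination -h

lemma commute_xa_xa (s t : Z m) : Commute (xa s) (xa t) ↔ (t - s) + (t - s) = 0 := by
  unfold Commute SemiconjBy
  rw [xa_mul_xa, xa_mul_xa, a.injEq]
  constructor
  · intro h; linear_combination h
  · intro h; linear_combination h


def vmap (m : ℕ) : Fin (m-1) ⊕ Fin 2 → ConjClasses (QuaternionGroup m)
  | Sum.inl i => ConjClasses.mk (a (((i : ℕ) + 1 : ℕ) : Z m))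
  | Sum.inr b => ConjClasses.mk (xa (((b : ℕ) : ℕ) : Z m))

lemma double_ne (hm : 2 ≤ m) {s : ℕ} (h1 : 1 ≤ s) (h2 : s ≤ m - 1) :
    ((s : ℕ) : Z m) + ((s : ℕ) : Z m) ≠ 0 := by
  intro h
  have h3 : ((s + s : ℕ) : Z m) = 0 := by push_cast; exact h
  rw [ZMod.natCast_eq_zero_iff] at h3
  have := Nat.le_of_dvd (by omega) h3
  omega

lemma cast_fin_inj (hm : 2 ≤ m) {s t : ℕ} (hs1 : 1 ≤ s) (hs2 : s ≤ m - 1)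
    (ht1 : 1 ≤ t) (ht2 : t ≤ m - 1) (h : ((s:ℕ) : Z m) = ((t:ℕ) : Z m)) : s = t := by
  haveI : NeZero (2*m) := ⟨by omega⟩
  have := congrArg ZMod.val h
  rwa [ZMod.val_cast_of_lt (by omega), ZMod.val_cast_of_lt (by omega)] at this

lemma cast_fin_not_neg (hm : 2 ≤ m) {s t : ℕ} (hs1 : 1 ≤ s) (hs2 : s ≤ m - 1)
    (ht1 : 1 ≤ t) (ht2 : t ≤ m - 1) (h : ((t:ℕ) : Z m) = -((s:ℕ) : Z m)) : False := by
  have h3 : ((t + s : ℕ) : Z m) = 0 := by push_cast; rw [h]; ring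
  rw [ZMod.natCast_eq_zero_iff] at h3
  have := Nat.le_of_dvd (by omega) h3
  omega

lemma psi_fin2_ne {b b' : Fin 2} (h : b ≠ b') :
    (((b:ℕ) : ZMod 2)) ≠ (((b':ℕ) : ZMod 2)) := by
  fin_cases b <;> fin_cases b' <;> simp_all <;> decide

lemma vmem (hm : 2 ≤ m) (u : Fin (m-1) ⊕ Fin 2) :
    ∃ g, g ∉ Subgroup.center (QuaternionGroup m) ∧ ConjClasses.mk g = vmap m u := by
  cases u with
  | inl i =>
      refine ⟨_, ?_, rfl⟩
      exact a_noncentral _ (double_ne hm (by omega) (by have := i.isLt; omega))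
  | inr b => exact ⟨_, xa_noncentral hm _, rfl⟩

lemma vmap_inj (hm : 2 ≤ m) : Function.Injective (vmap m) := by
  rintro (i|b) (j|b') h <;> simp only [vmap, ConjClasses.mk_eq_mk_iff_isConj] at h
  · rw [isConj_a_iff] at h
    rcases h with h | h <;> rw [a.injEq] at h
    · have := cast_fin_inj hm (by omega) (by have := j.isLt; omega)
        (by omega) (by have := i.isLt; omega) h
      have hij : (j : ℕ) = (i : ℕ) := by omega
      simp [Fin.ext_iff, hij]
    · exact absurd h (fun hh => cast_fin_not_neg hm (by have := i.isLt; omega)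
        (by have := i.isLt; omega) (by omega) (by have := j.isLt; omega) hh)
  · exact absurd h (not_isConj_a_xa _ _)
  · exact absurd h.symm (not_isConj_a_xa _ _)
  · rw [isConj_xa_iff _ _ hm] at h
    obtain ⟨j, hj, hpsi⟩ := h
    rw [xa.injEq] at hj
    subst hj
    rw [psi_natCast, psi_natCast] at hpsi
    have : b' = b := by
      by_contra hne
      exact psi_fin2_ne hne (by rw [hpsi])
    simp [this]

lemma vmap_surj (hm : 2 ≤ m) (c : ConjClasses (QuaternionGroup m))
    (hc : ∃ g, g ∉ Subgroup.center (QuaternionGroup m) ∧ ConjClasses.mk g = c) :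
    ∃ u, vmap m u = c := by
  haveI : NeZero (2*m) := ⟨by omega⟩
  obtain ⟨g, hg, rfl⟩ := hc
  rcases g with i | i
  · have h0 : i ≠ 0 := by
      rintro rfl
      exact hg (by rw [show a (0 : Z m) = 1 from rfl]; exact Subgroup.one_mem _)
    have hmeq : i ≠ (m : Z m) := by rintro rfl; exact hg a_m_mem_center
    have hv0 : i.val ≠ 0 := fun hh => h0 (by rw [← ZMod.natCast_zmod_val i, hh]; simp)
    have hvm : i.val ≠ m := fun hh => hmeq (by rw [← ZMod.natCast_zmod_val i, hh])
    have hvlt : i.val < 2*m := ZMod.val_lt i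
    by_cases hsmall : i.val ≤ m - 1
    · refine ⟨Sum.inl ⟨i.val - 1, by omega⟩, ?_⟩
      simp only [vmap]
      congr 1
      rw [show (i.val - 1) + 1 = i.val by omega, ZMod.natCast_zmod_val i]
    · refine ⟨Sum.inl ⟨2*m - i.val - 1, by omega⟩, ?_⟩
      simp only [vmap]
      rw [ConjClasses.mk_eq_mk_iff_isConj]
      have hcast : ((2*m - i.val - 1 + 1 : ℕ) : Z m) = -i := by
        rw [show 2*m - i.val - 1 + 1 = 2*m - i.val by omega]
        have h4 : ((2*m - i.val : ℕ) : Z m) + ((i.val : ℕ) : Z m) = 0 := by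
          rw [← Nat.cast_add, show 2*m - i.val + i.val = 2*m by omega]
          exact ZMod.natCast_self _
        rw [ZMod.natCast_zmod_val i] at h4
        exact eq_neg_of_add_eq_zero_left h4
      rw [hcast]
      exact (isConj_a_iff _ _).mpr (Or.inr (by rw [neg_neg]))
  · refine ⟨Sum.inr ⟨i.val % 2, by omega⟩, ?_⟩
    simp only [vmap]
    rw [ConjClasses.mk_eq_mk_iff_isConj, isConj_xa_iff _ _ hm]
    refine ⟨i, rfl, ?_⟩
    have h5 : ψ i = ((i.val : ℕ) : ZMod 2) := by
      conv_lhs => rw [← ZMod.natCast_zmod_val i]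
      exact psi_natCast i.val
    rw [h5, psi_natCast, ZMod.natCast_mod]

abbrev Vtx (m : ℕ) := {c : ConjClasses (QuaternionGroup m) //
  ∃ g, g ∉ Subgroup.center (QuaternionGroup m) ∧ ConjClasses.mk g = c}

def vfun (hm : 2 ≤ m) (u : Fin (m-1) ⊕ Fin 2) : Vtx m := ⟨vmap m u, vmem hm u⟩

lemma vfun_bij (hm : 2 ≤ m) : Function.Bijective (vfun hm) := by
  constructor
  · intro u v h
    exact vmap_inj hm (congrArg Subtype.val h)
  · rintro ⟨c, hc⟩
    obtain ⟨u, hu⟩ := vmap_surj hm c hc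
    exact ⟨u, Subtype.ext hu⟩

lemma vfun_ne (hm : 2 ≤ m) {u v : Fin (m-1) ⊕ Fin 2} (h : u ≠ v) :
    vfun hm u ≠ vfun hm v := fun hc => h ((vfun_bij hm).1 hc)

lemma mem_carrier_a (hm : 2 ≤ m) {s : ℕ} (hs1 : 1 ≤ s) (hs2 : s ≤ m - 1)
    {x : QuaternionGroup m}
    (hx : x ∈ ConjClasses.carrier (ConjClasses.mk (a ((s:ℕ) : Z m)))) :
    x = a ((s:ℕ) : Z m) ∨ x = a (-((s:ℕ) : Z m)) := by
  rw [ConjClasses.mem_carrier_iff_mk_eq, ConjClasses.mk_eq_mk_iff_isConj] at hx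
  exact (isConj_a_iff _ _).mp hx.symm

lemma mem_carrier_xa (hm : 2 ≤ m) {t : Z m} {x : QuaternionGroup m}
    (hx : x ∈ ConjClasses.carrier (ConjClasses.mk (xa t))) :
    ∃ j, x = xa j ∧ ψ j = ψ t := by
  rw [ConjClasses.mem_carrier_iff_mk_eq, ConjClasses.mk_eq_mk_iff_isConj] at hx
  exact (isConj_xa_iff _ _ hm).mp hx.symm

lemma adj_iff (hm : 2 ≤ m) (u v : Fin (m-1) ⊕ Fin 2) :
    (CCC (QuaternionGroup m)).Adj (vfun hm u) (vfun hm v) ↔ (CG m).Adj u v := by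
  rcases u with i | b <;> rcases v with j | b'
  · constructor
    · rintro ⟨hne, -⟩
      intro hij
      exact hne (by rw [show i = j from hij])
    · intro hij
      exact ⟨vfun_ne hm (by simpa using hij), _, ConjClasses.mem_carrier_mk,
        _, ConjClasses.mem_carrier_mk, commute_a_a _ _⟩
  · constructor
    · rintro ⟨hne, x, hx, y, hy, hxy⟩
      exfalso
      obtain hx' := mem_carrier_a hm (s := (i:ℕ)+1) (by omega) (by have := i.isLt; omega) hx
      obtain ⟨t, rfl, -⟩ := mem_carrier_xa hm hy
      have h2 : ((((i:ℕ)+1 : ℕ)) : Z m) + (((i:ℕ)+1 : ℕ) : Z m) = 0 := by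
        rcases hx' with rfl | rfl
        · exact (commute_a_xa _ _).mp hxy
        · have h3 := (commute_a_xa _ _).mp hxy
          linear_combination -h3
      exact double_ne hm (by omega) (by have := i.isLt; omega) h2
    · intro h
      exact absurd h (CG_adj_lr m i b')
  · constructor
    · rintro ⟨hne, x, hx, y, hy, hxy⟩
      exfalso
      obtain hy' := mem_carrier_a hm (s := (j:ℕ)+1) (by omega) (by have := j.isLt; omega) hy
      obtain ⟨t, rfl, -⟩ := mem_carrier_xa hm hx
      have h2 : ((((j:ℕ)+1 : ℕ)) : Z m) + (((j:ℕ)+1 : ℕ) : Z m) = 0 := by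
        rcases hy' with rfl | rfl
        · exact (commute_a_xa _ _).mp hxy.symm
        · have h3 := (commute_a_xa _ _).mp hxy.symm
          linear_combination -h3
      exact double_ne hm (by omega) (by have := j.isLt; omega) h2
    · intro h
      exact absurd h (CG_adj_rl m j b)
  · constructor
    · rintro ⟨hne, x, hx, y, hy, hxy⟩
      have hbb' : b ≠ b' := fun hb => hne (by rw [hb])
      refine ⟨hbb', ?_⟩
      obtain ⟨s, rfl, hs⟩ := mem_carrier_xa hm hx
      obtain ⟨t, rfl, ht⟩ := mem_carrier_xa hm hy
      rw [psi_natCast] at hs ht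
      have hc := (commute_xa_xa _ _).mp hxy
      have hpne : ψ s ≠ ψ t := by
        rw [hs, ht]
        exact psi_fin2_ne hbb'
      rcases (F1 hm _).mp hc with h0 | h0
      · exact absurd (by rw [sub_eq_zero.mp h0]) hpne.symm
      · rcases Nat.even_or_odd m with he | ho
        · exfalso
          have hm0 : ((m:ℕ) : ZMod 2) = 0 := by
            rw [← ZMod.natCast_mod, Nat.even_iff.mp he]
            rfl
          have := congrArg ψ h0
          rw [map_sub, psi_natCast, hm0, sub_eq_zero] at this
          exact hpne this.symm
        · exact ho
    · rintro ⟨hbb', hodd⟩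
      have hψm : ((m:ℕ) : ZMod 2) = 1 := by
        rw [← ZMod.natCast_mod, Nat.odd_iff.mp hodd]
        rfl
      refine ⟨vfun_ne hm (by simpa using hbb'), xa (((b:ℕ) : ℕ) : Z m),
        ConjClasses.mem_carrier_mk,
        xa ((((b:ℕ) : ℕ) : Z m) + (m : Z m)), ?_, ?_⟩
      · rw [ConjClasses.mem_carrier_iff_mk_eq]
        show ConjClasses.mk (xa ((((b:ℕ) : ℕ) : Z m) + (m : Z m)))
          = ConjClasses.mk (xa (((b' : ℕ) : ℕ) : Z m))
        rw [ConjClasses.mk_eq_mk_iff_isConj, isConj_xa_iff _ _ hm]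
        refine ⟨_, rfl, ?_⟩
        rw [map_add, psi_natCast, psi_natCast, psi_natCast, hψm]
        fin_cases b <;> fin_cases b' <;> simp_all <;> decide
      · rw [commute_xa_xa]
        linear_combination two_m_zero (m := m)

def cccIso (hm : 2 ≤ m) : CG m ≃g CCC (QuaternionGroup m) where
  toEquiv := Equiv.ofBijective (vfun hm) (vfun_bij hm)
  map_rel_iff' := @fun u v => adj_iff hm u v

lemma lapEnergy_CCC_eq {m : ℕ} (hm : 2 ≤ m) :
    lapEnergy (CCC (QuaternionGroup m)) = lapEnergy (CG m) := by
  haveI : NeZero m := ⟨by omega⟩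
  haveI : Fintype (Vtx m) := Fintype.ofFinite _
  exact (lapEnergy_iso (cccIso hm)).symm

/-- Laplacian energy of the commuting conjugacy class graph of the dicyclic group `Q_{4m}`. -/
theorem lapEnergy_CCC_quaternion (m : ℕ) (hm : 2 ≤ m) :
    (m = 3 → lapEnergy (CCC (QuaternionGroup m)) = 4) ∧
    (Odd m → 5 ≤ m →
      lapEnergy (CCC (QuaternionGroup m)) =
        2 * ((m : ℝ) - 2) * (3 * (m : ℝ) - 5) / ((m : ℝ) + 1)) ∧
    (Even m →
      lapEnergy (CCC (QuaternionGroup m)) =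
        6 * ((m : ℝ) - 1) * ((m : ℝ) - 2) / ((m : ℝ) + 1)) := by
  refine ⟨?_, ?_, ?_⟩
  · rintro rfl
    rw [lapEnergy_CCC_eq (by norm_num), LE_CG_odd 3 (by norm_num) (by decide)]
    norm_num
  · intro hodd hm5
    rw [lapEnergy_CCC_eq hm, LE_CG_odd m hm hodd]
    have hm' : (5:ℝ) ≤ (m:ℝ) := by exact_mod_cast hm5
    have habs : |2 - ((((m:ℝ)-1)*((m:ℝ)-2)+2)/((m:ℝ)+1))|
        = (((m:ℝ)-1)*((m:ℝ)-2)+2)/((m:ℝ)+1) - 2 := by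
      rw [abs_of_nonpos, neg_sub]
      rw [sub_nonpos, le_div_iff₀ (by positivity)]
      nlinarith
    rw [habs]
    have h1 : (m:ℝ) + 1 ≠ 0 := by positivity
    field_simp
    ring
  · intro heven
    rw [lapEnergy_CCC_eq hm, LE_CG_even m hm (Nat.not_odd_iff_even.mpr heven)]
    have h1 : (m:ℝ) + 1 ≠ 0 := by positivity
    field_simp
    ring

end
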